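/- Let g : ℝ² → ℝ be a smooth compactly supported function and c := exp∘g. Then ∫_{ℝ²} c⁻² |∇c|² Δc dx = −(2/3)∫_{ℝ²} c⁻¹ |D²c|² dx + (2/3)∫_{ℝ²} c⁻³ |∇c|⁴ dx + (2/3)∫_{ℝ²} c⁻¹ (Δc)² dx. -/

import Mathlib

open MeasureTheory Real

noncomputable section

/-- The plane `ℝ²` as a Euclidean space. -/
abbrev E2 : Type := EuclideanSpace ℝ (Fin 2)

/-- `i`-th partial derivative of a scalar function on `ℝ²`. -/
def pd (i : Fin 2) (f : E2 → ℝ) (x : E2) : ℝ :=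
  fderiv ℝ f x (EuclideanSpace.single i 1)

/-- Laplacian `Δf = ∑ i, ∂_i ∂_i f`. -/
def lap (f : E2 → ℝ) (x : E2) : ℝ := ∑ i, pd i (pd i f) x

/-- `|∇f|² = ∑ i, (∂_i f)²`. -/
def gradSq (f : E2 → ℝ) (x : E2) : ℝ := ∑ i, (pd i f x) ^ 2

/-- Squared Frobenius norm of the Hessian: `|D²f|² = ∑ i j, (∂²_{ij} f)²`. -/
def hessSq (f : E2 → ℝ) (x : E2) : ℝ := ∑ i, ∑ j, (pd i (pd j f) x) ^ 2

/-- `⟨D²f ∇f, ∇f⟩ = ∑ i j, (∂²_{ij} f)(∂_i f)(∂_j f)`. -/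
def hessGrad (f : E2 → ℝ) (x : E2) : ℝ :=
  ∑ i, ∑ j, pd i (pd j f) x * pd i f x * pd j f x

end

/-!
The identity is the divergence theorem for the single vector field
`V = c⁻¹ (c⁻¹ |∇c|² ∇c + ∇|∇c|² − 2 Δc ∇c)` (`fluxField`), the combination of the three fields
integrated by parts in the paper; `V` vanishes outside `tsupport g`, where `c ≡ 1`.
The product rule and Bochner's formula `Δ|∇c|² = 2 |D²c|² + 2 ∇c · ∇Δc` give
`div V = 3 c⁻² |∇c|² Δc + 2 c⁻¹ |D²c|² − 2 c⁻³ |∇c|⁴ − 2 c⁻¹ (Δc)²`.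
-/

open Set

theorem integral_fderiv_apply_eq_zero {E G : Type*} [NormedAddCommGroup E] [NormedSpace ℝ E]
    [FiniteDimensional ℝ E] [MeasurableSpace E] [BorelSpace E] {μ : Measure E}
    [μ.IsAddHaarMeasure] [NormedAddCommGroup G] [NormedSpace ℝ G] {f : E → G} {v : E}
    (hf : Differentiable ℝ f) (hfi : Integrable f μ)
    (hf'i : Integrable (fun x => fderiv ℝ f x v) μ) :
    ∫ x, fderiv ℝ f x v ∂μ = 0 := by
  simpa using integral_smul_fderiv_eq_neg_fderiv_smul_of_integrable (f := fun _ => (1 : ℝ))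
    (g := f) (v := v) (μ := μ) (by simp) (by simpa using hf'i) (by simpa using hfi)
    (fun x _ => differentiableAt_const _) (fun x _ => hf x)

section Calculus

variable {f g : E2 → ℝ} {x : E2} (i : Fin 2)

@[simp]
lemma pd_const (a : ℝ) : pd i (fun _ => a) x = 0 := by
  simp [pd]

lemma pd_add (hf : DifferentiableAt ℝ f x) (hg : DifferentiableAt ℝ g x) :
    pd i (fun y => f y + g y) x = pd i f x + pd i g x := by
  simp [pd, fderiv_fun_add hf hg]

lemma pd_sub (hf : DifferentiableAt ℝ f x) (hg : DifferentiableAt ℝ g x) :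
    pd i (fun y => f y - g y) x = pd i f x - pd i g x := by
  simp [pd, fderiv_fun_sub hf hg]

lemma pd_mul (hf : DifferentiableAt ℝ f x) (hg : DifferentiableAt ℝ g x) :
    pd i (fun y => f y * g y) x = pd i f x * g x + f x * pd i g x := by
  simp [pd, fderiv_fun_mul hf hg]
  ring

lemma pd_inv (hf : DifferentiableAt ℝ f x) (hx : f x ≠ 0) :
    pd i (fun y => (f y)⁻¹) x = -pd i f x / f x ^ 2 := by
  simp [pd, fderiv_fun_comp x (differentiableAt_inv hx) hf, fderiv_inv]
  ring

lemma pd_sum {ι : Type*} (s : Finset ι) {F : ι → E2 → ℝ}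
    (hF : ∀ k ∈ s, DifferentiableAt ℝ (F k) x) :
    pd i (fun y => ∑ k ∈ s, F k y) x = ∑ k ∈ s, pd i (F k) x := by
  simp [pd, fderiv_fun_sum hF]

end Calculus

lemma contDiff_pd {n : WithTop ℕ∞} {f : E2 → ℝ} (hf : ContDiff ℝ (n + 1) f) (i : Fin 2) :
    ContDiff ℝ n (pd i f) :=
  (hf.fderiv_right le_rfl).clm_apply contDiff_const

lemma pd_pd_eq_fderiv_fderiv {f : E2 → ℝ} {x : E2} (hf : ContDiff ℝ 2 f) (i j : Fin 2) :
    pd i (pd j f) x =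
      fderiv ℝ (fderiv ℝ f) x (EuclideanSpace.single i 1) (EuclideanSpace.single j 1) := by
  have hd : Differentiable ℝ (fderiv ℝ f) := (hf.fderiv_right le_rfl).differentiable one_ne_zero
  change fderiv ℝ (fun y => fderiv ℝ f y (EuclideanSpace.single j 1)) x _ = _
  simp [fderiv_clm_apply (hd x) (differentiableAt_const _)]

lemma pd_comm {f : E2 → ℝ} (hf : ContDiff ℝ 2 f) (i j : Fin 2) :
    pd i (pd j f) = pd j (pd i f) := by
  ext x
  rw [pd_pd_eq_fderiv_fderiv hf, pd_pd_eq_fderiv_fderiv hf]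
  exact hf.contDiffAt.isSymmSndFDerivAt (by simp) _ _

section Smooth

variable {n : WithTop ℕ∞} {f : E2 → ℝ}

lemma contDiff_pd_pd (hf : ContDiff ℝ (n + 2) f) (i j : Fin 2) : ContDiff ℝ n (pd i (pd j f)) :=
  contDiff_pd (contDiff_pd (by rwa [add_assoc, one_add_one_eq_two]) j) i

lemma contDiff_gradSq (hf : ContDiff ℝ (n + 1) f) : ContDiff ℝ n (gradSq f) :=
  ContDiff.sum fun i _ => (contDiff_pd hf i).pow 2

lemma contDiff_lap (hf : ContDiff ℝ (n + 2) f) : ContDiff ℝ n (lap f) :=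
  ContDiff.sum fun i _ => contDiff_pd_pd hf i i

lemma contDiff_hessSq (hf : ContDiff ℝ (n + 2) f) : ContDiff ℝ n (hessSq f) :=
  ContDiff.sum fun i _ => ContDiff.sum fun j _ => (contDiff_pd_pd hf i j).pow 2

end Smooth

lemma pd_gradSq {f : E2 → ℝ} (hf : ContDiff ℝ 2 f) (j : Fin 2) (x : E2) :
    pd j (gradSq f) x = 2 * ∑ i, pd i f x * pd j (pd i f) x := by
  have hd : ∀ i, Differentiable ℝ (pd i f) :=
    fun i => (contDiff_pd (n := 1) hf i).differentiable one_ne_zero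
  unfold gradSq
  simp (disch := fun_prop) only [Fin.sum_univ_two, pd_add, sq, pd_mul]
  ring

lemma lap_gradSq {f : E2 → ℝ} (hf : ContDiff ℝ 3 f) (x : E2) :
    lap (gradSq f) x = 2 * hessSq f x + 2 * ∑ i, pd i f x * pd i (lap f) x := by
  have hf1 : ∀ i, ContDiff ℝ 2 (pd i f) := fun i => contDiff_pd hf i
  have hd1 : ∀ i, Differentiable ℝ (pd i f) := fun i => (hf1 i).differentiable (by simp)
  have hd2 : ∀ i j, Differentiable ℝ (pd i (pd j f)) :=
    fun i j => (contDiff_pd_pd (n := 1) hf i j).differentiable one_ne_zero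
  have hG : ∀ j, pd j (gradSq f) = fun y => 2 * ∑ i, pd i f y * pd j (pd i f) y :=
    fun j => funext (pd_gradSq (hf.of_le (by norm_num)) j)
  have hL : ∀ i, pd i (lap f) x = ∑ j, pd i (pd j (pd j f)) x := fun i =>
    pd_sum i _ fun j _ => hd2 j j x
  simp only [lap, hG, hL, hessSq, Fin.sum_univ_two]
  simp (disch := fun_prop) only [pd_const, pd_add, pd_mul]
  rw [pd_comm (hf1 0) 1 0, pd_comm (hf.of_le (by norm_num)) 1 0, pd_comm (hf1 1) 1 0]
  ring

noncomputable def fluxField (c : E2 → ℝ) (j : Fin 2) (y : E2) : ℝ :=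
  (c y)⁻¹ * ((c y)⁻¹ * gradSq c y * pd j c y + pd j (gradSq c) y - 2 * lap c y * pd j c y)

lemma contDiff_fluxField {n : WithTop ℕ∞} {c : E2 → ℝ} (hc : ContDiff ℝ (n + 2) c)
    (hc0 : ∀ y, c y ≠ 0) (j : Fin 2) : ContDiff ℝ n (fluxField c j) := by
  have hc' : ContDiff ℝ (n + 1 + 1) c := by rwa [add_assoc, one_add_one_eq_two]
  have hinv : ContDiff ℝ n fun y => (c y)⁻¹ := hc'.of_succ.of_succ.inv hc0
  have hc1 : ContDiff ℝ n (pd j c) := (contDiff_pd hc' j).of_succ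
  have hG : ContDiff ℝ n (gradSq c) := (contDiff_gradSq hc').of_succ
  exact hinv.mul (((hinv.mul hG).mul hc1).add (contDiff_pd (contDiff_gradSq hc') j) |>.sub
    (((contDiff_const.mul (contDiff_lap hc)).mul hc1)))

lemma sum_pd_fluxField {c : E2 → ℝ} (hc : ContDiff ℝ 3 c) (hc0 : ∀ y, c y ≠ 0) (x : E2) :
    ∑ j, pd j (fluxField c j) x
      = 3 * (gradSq c x * lap c x / c x ^ 2) + 2 * (hessSq c x / c x)
        - 2 * (gradSq c x ^ 2 / c x ^ 3) - 2 * (lap c x ^ 2 / c x) := by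
  have hd : Differentiable ℝ c := hc.differentiable (by simp)
  have hd1 : ∀ i, Differentiable ℝ (pd i c) :=
    fun i => (contDiff_pd (n := 2) hc i).differentiable (by simp)
  have hdG : Differentiable ℝ (gradSq c) := (contDiff_gradSq (n := 2) hc).differentiable (by simp)
  have hdG1 : ∀ i, Differentiable ℝ (pd i (gradSq c)) :=
    fun i => (contDiff_pd (n := 1) (contDiff_gradSq (n := 2) hc) i).differentiable (by simp)
  have hdL : Differentiable ℝ (lap c) := (contDiff_lap (n := 1) hc).differentiable (by simp)
  have hG : gradSq c x = pd 0 c x ^ 2 + pd 1 c x ^ 2 := Fin.sum_univ_two _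
  have hL : lap c x = pd 0 (pd 0 c) x + pd 1 (pd 1 c) x := Fin.sum_univ_two _
  have hB := lap_gradSq hc x
  simp only [lap, Fin.sum_univ_two] at hB
  unfold fluxField
  simp only [Fin.sum_univ_two]
  simp (disch := first | fun_prop (disch := exact hc0 _) | exact hc0 _) only
    [pd_mul, pd_add, pd_sub, pd_const, pd_inv]
  linear_combination (2 * (c x)⁻¹ * gradSq c x - 2 * lap c x) / c x ^ 2 * hG
    + (2 * (c x)⁻¹ * lap c x - (c x)⁻¹ ^ 2 * gradSq c x) * hL + (c x)⁻¹ * hB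

lemma pd_eqOn_zero {U : Set E2} (hU : IsOpen U) {f : E2 → ℝ} {a : ℝ}
    (hf : EqOn f (fun _ => a) U) (i : Fin 2) : EqOn (pd i f) (fun _ => 0) U := fun x hx => by
  simp [pd, (hf.eventuallyEq_of_mem (hU.mem_nhds hx)).fderiv_eq]

lemma hasCompactSupport_pd {f : E2 → ℝ} (hf : HasCompactSupport f) (i : Fin 2) :
    HasCompactSupport (pd i f) :=
  (hf.fderiv ℝ).comp_left (g := fun L : E2 →L[ℝ] ℝ => L (EuclideanSpace.single i 1)) rfl

lemma integral_sum_pd_eq_zero {V : Fin 2 → E2 → ℝ} (hV : ∀ j, ContDiff ℝ 1 (V j))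
    (hVc : ∀ j, HasCompactSupport (V j)) : ∫ x, ∑ j, pd j (V j) x = 0 := by
  have hint : ∀ j, Integrable (pd j (V j)) := fun j =>
    (contDiff_pd (n := 0) (hV j) j).continuous.integrable_of_hasCompactSupport
      (hasCompactSupport_pd (hVc j) j)
  rw [integral_finsetSum _ fun j _ => hint j]
  refine Finset.sum_eq_zero fun j _ => integral_fderiv_apply_eq_zero
    ((hV j).differentiable one_ne_zero) ((hV j).continuous.integrable_of_hasCompactSupport (hVc j))
    (hint j)

section Vanishing

variable {U : Set E2} {c : E2 → ℝ} {a : ℝ}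

lemma gradSq_eqOn_zero (hU : IsOpen U) (hc : EqOn c (fun _ => a) U) :
    EqOn (gradSq c) (fun _ => 0) U := fun x hx => by
  simp [gradSq, pd_eqOn_zero hU hc _ hx]

lemma lap_eqOn_zero (hU : IsOpen U) (hc : EqOn c (fun _ => a) U) :
    EqOn (lap c) (fun _ => 0) U := fun x hx => by
  simp [lap, pd_eqOn_zero hU (pd_eqOn_zero hU hc _) _ hx]

lemma hessSq_eqOn_zero (hU : IsOpen U) (hc : EqOn c (fun _ => a) U) :
    EqOn (hessSq c) (fun _ => 0) U := fun x hx => by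
  simp [hessSq, pd_eqOn_zero hU (pd_eqOn_zero hU hc _) _ hx]

lemma fluxField_eqOn_zero (hU : IsOpen U) (hc : EqOn c (fun _ => a) U) (j : Fin 2) :
    EqOn (fluxField c j) (fun _ => 0) U := fun x hx => by
  simp [fluxField, pd_eqOn_zero hU hc _ hx, pd_eqOn_zero hU (gradSq_eqOn_zero hU hc) _ hx]

end Vanishing

theorem integral_gradSq_mul_lap_div_sq {c : E2 → ℝ} {a : ℝ} {K : Set E2} (hK : IsCompact K)
    (hc : ContDiff ℝ 3 c) (hc0 : ∀ x, c x ≠ 0) (hcK : EqOn c (fun _ => a) Kᶜ) :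
    ∫ x, gradSq c x * lap c x / c x ^ 2
      = -(2 / 3) * (∫ x, hessSq c x / c x) + (2 / 3) * (∫ x, gradSq c x ^ 2 / c x ^ 3)
        + (2 / 3) * ∫ x, lap c x ^ 2 / c x := by
  have hU : IsOpen Kᶜ := hK.isClosed.isOpen_compl
  have hint : ∀ {F : E2 → ℝ}, Continuous F → EqOn F (fun _ => 0) Kᶜ → Integrable F :=
    fun hF hF0 => hF.integrable_of_hasCompactSupport (.intro hK fun x hx => hF0 hx)
  have hdiv := integral_sum_pd_eq_zero (fun j => contDiff_fluxField hc hc0 j)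
    fun j => .intro hK fun x hx => fluxField_eqOn_zero hU hcK j hx
  simp only [sum_pd_fluxField hc hc0] at hdiv
  have hc_cont := hc.continuous
  have hG_cont := (contDiff_gradSq (n := 2) hc).continuous
  have hL_cont := (contDiff_lap (n := 1) hc).continuous
  have hH_cont := (contDiff_hessSq (n := 1) hc).continuous
  have hG := gradSq_eqOn_zero hU hcK
  have hL := lap_eqOn_zero hU hcK
  have hI1 : Integrable fun x => gradSq c x * lap c x / c x ^ 2 :=
    hint (by fun_prop (disch := simp [hc0])) fun x hx => by simp [hG hx]
  have hI2 : Integrable fun x => hessSq c x / c x :=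
    hint (by fun_prop (disch := simp [hc0])) fun x hx => by simp [hessSq_eqOn_zero hU hcK hx]
  have hI3 : Integrable fun x => gradSq c x ^ 2 / c x ^ 3 :=
    hint (by fun_prop (disch := simp [hc0])) fun x hx => by simp [hG hx]
  have hI4 : Integrable fun x => lap c x ^ 2 / c x :=
    hint (by fun_prop (disch := simp [hc0])) fun x hx => by simp [hL hx]
  rw [integral_sub, integral_sub, integral_add] at hdiv
  · simp only [integral_const_mul] at hdiv
    linarith
  all_goals fun_prop

/-- Equation (3.8): for `c = exp ∘ g` with `g` smooth and compactly supported,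
`∫ c⁻² |∇c|² Δc = −(2/3) ∫ c⁻¹ |D²c|² + (2/3) ∫ c⁻³ |∇c|⁴ + (2/3) ∫ c⁻¹ (Δc)²`. -/
theorem stmt3 (g : E2 → ℝ) (hg : ContDiff ℝ (⊤ : ℕ∞) g) (hgc : HasCompactSupport g)
    (c : E2 → ℝ) (hc : c = fun x => Real.exp (g x)) :
    ∫ x : E2, gradSq c x * lap c x / (c x) ^ 2
      = -(2 / 3) * (∫ x : E2, hessSq c x / c x)
        + (2 / 3) * (∫ x : E2, (gradSq c x) ^ 2 / (c x) ^ 3)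
        + (2 / 3) * ∫ x : E2, (lap c x) ^ 2 / c x := by
  have hc3 : ContDiff ℝ 3 c := hc ▸ Real.contDiff_exp.comp (hg.of_le (by norm_cast))
  have hc1 : EqOn c (fun _ => 1) (tsupport g)ᶜ := fun x hx => by
    simp [hc, image_eq_zero_of_notMem_tsupport hx]
  exact integral_gradSq_mul_lap_div_sq hgc hc3 (fun x => by simp [hc, Real.exp_ne_zero]) hc1
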